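/- arXiv:1901.03238 — 9 statements merged into one kernel-verified Lean document; each statement's English description precedes it below -/
import Mathlib

section
/- Let n ≥ 1, p_0 > p_1 > ... > p_n > 0 be real numbers and α_0, ..., α_n nonzero reals. Then the function f(t) = Σ_{j=0}^n α_j p_j^t has at most as many real zeros as there are sign changes in the sequence α_0, α_1, ..., α_n. -/
/-!
Write `pⱼ^t = exp (bⱼ t)` with `bⱼ = log pⱼ` strictly decreasing. If the coefficients change
sign between `k` and `k + 1`, pick `c` strictly between `b_{k+1}` and `b_k`: the function
`e^{-ct} f(t)` has the same zeros as `f`, and its derivative is again an exponential sum, with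
coefficients `αⱼ (bⱼ - c)`. The factor `bⱼ - c` is positive up to `k` and negative afterwards,
so it removes exactly the sign change at `k`. By Rolle's theorem `f` has at most one zero
more than this derivative, and induction on the number of sign changes ends at a sum whose
terms all have the same sign, which has no zero.
-/

open Real Finset

section Rolle

variable {f f' : ℝ → ℝ}

theorem card_le_card_add_one_of_hasDerivAt (hf : ∀ t, HasDerivAt f (f' t) t)
    {T Z : Finset ℝ} (hT : ∀ t ∈ T, f t = 0) (hZ : ∀ t, f' t = 0 → t ∈ Z) :
    T.card ≤ Z.card + 1 := by
  have hcont : Continuous f := continuous_iff_continuousAt.2 fun t => (hf t).continuousAt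
  refine card_le_of_interleaved fun x hx y hy hxy _ => ?_
  obtain ⟨c, hc, hc0⟩ := exists_hasDerivAt_eq_zero hxy hcont.continuousOn
    (by rw [hT x hx, hT y hy]) fun t _ => hf t
  exact ⟨c, hZ c hc0, hc⟩

theorem zeros_finite_and_ncard_le_of_hasDerivAt (hf : ∀ t, HasDerivAt f (f' t) t)
    (hf' : {t | f' t = 0}.Finite) :
    {t | f t = 0}.Finite ∧ {t | f t = 0}.ncard ≤ {t | f' t = 0}.ncard + 1 := by
  have hZ : ∀ t, f' t = 0 → t ∈ hf'.toFinset := by simp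
  have hfin : {t | f t = 0}.Finite := by
    by_contra hinf
    obtain ⟨T, hTsub, hTcard⟩ :=
      Set.Infinite.exists_subset_card_eq hinf (hf'.toFinset.card + 2)
    have := card_le_card_add_one_of_hasDerivAt hf (fun t ht => hTsub ht) hZ
    omega
  refine ⟨hfin, ?_⟩
  rw [Set.ncard_eq_toFinset_card _ hfin, Set.ncard_eq_toFinset_card _ hf']
  exact card_le_card_add_one_of_hasDerivAt hf (by simp) hZ

end Rolle

section SignChanges

variable {R : Type*} [CommRing R] [LinearOrder R] {n : ℕ}

def signChanges (α : Fin (n + 1) → R) : Finset (Fin n) :=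
  univ.filter fun j => α j.castSucc * α j.succ < 0

theorem mem_signChanges {α : Fin (n + 1) → R} {j : Fin n} :
    j ∈ signChanges α ↔ α j.castSucc * α j.succ < 0 := by
  simp [signChanges]

variable [IsStrictOrderedRing R]

theorem mul_pos_of_signChanges_eq_empty {α : Fin (n + 1) → R} (hα : ∀ j, α j ≠ 0)
    (h : signChanges α = ∅) (j : Fin (n + 1)) : 0 < α 0 * α j := by
  induction j using Fin.induction with
  | zero => exact mul_self_pos.2 (hα 0)
  | succ i ih =>
    have hi : 0 < α i.castSucc * α i.succ :=
      lt_of_le_of_ne (not_lt.1 fun hneg => by simpa [h] using mem_signChanges.2 hneg)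
        (mul_ne_zero (hα _) (hα _)).symm
    nlinarith [mul_pos ih hi, mul_self_pos.2 (hα i.castSucc)]

theorem signChanges_mul_eq_erase {α w : Fin (n + 1) → R} {k : Fin n}
    (hk : k ∈ signChanges α) (hpos : ∀ j, j ≤ k.castSucc → 0 < w j)
    (hneg : ∀ j, k.succ ≤ j → w j < 0) :
    signChanges (fun j => α j * w j) = (signChanges α).erase k := by
  ext j
  rw [mem_erase, mem_signChanges, mem_signChanges,
    show α j.castSucc * w j.castSucc * (α j.succ * w j.succ) =
      α j.castSucc * α j.succ * (w j.castSucc * w j.succ) by ring]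
  rcases lt_trichotomy j k with hjk | rfl | hjk
  · have hw : 0 < w j.castSucc * w j.succ :=
      mul_pos (hpos _ (Fin.castSucc_le_castSucc_iff.2 hjk.le))
        (hpos _ (Fin.succ_le_castSucc_iff.2 hjk))
    simp only [hjk.ne, ne_eq, not_false_eq_true, true_and]
    exact ⟨fun h => by nlinarith, fun h => mul_neg_of_neg_of_pos h hw⟩
  · have hw : w j.castSucc * w j.succ < 0 :=
      mul_neg_of_pos_of_neg (hpos _ le_rfl) (hneg _ le_rfl)
    simp only [ne_eq, not_true_eq_false, false_and, iff_false, not_lt]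
    exact (mul_pos_of_neg_of_neg (mem_signChanges.1 hk) hw).le
  · have hw : 0 < w j.castSucc * w j.succ :=
      mul_pos_of_neg_of_neg (hneg _ (Fin.succ_le_castSucc_iff.2 hjk))
        (hneg _ (Fin.succ_le_succ_iff.2 hjk.le))
    simp only [hjk.ne', ne_eq, not_false_eq_true, true_and]
    exact ⟨fun h => by nlinarith, fun h => mul_neg_of_neg_of_pos h hw⟩

end SignChanges

section ExpSum

variable {ι : Type*} [Fintype ι]

noncomputable def expSum (α b : ι → ℝ) (t : ℝ) : ℝ :=
  ∑ j, α j * exp (b j * t)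

theorem hasDerivAt_expSum (α b : ι → ℝ) (t : ℝ) :
    HasDerivAt (expSum α b) (expSum (fun j => α j * b j) b t) t := by
  unfold expSum
  refine HasDerivAt.fun_sum fun j _ => ?_
  have h := (((hasDerivAt_id t).const_mul (b j)).exp).const_mul (α j)
  simp only [id, mul_one] at h
  exact h.congr_deriv (by ring)

theorem expSum_sub_const (α b : ι → ℝ) (c t : ℝ) :
    expSum α (fun j => b j - c) t = exp (-(c * t)) * expSum α b t := by
  simp only [expSum, mul_sum]
  refine sum_congr rfl fun j _ => ?_
  rw [mul_left_comm, ← exp_add]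
  congr 2
  ring

theorem expSum_sub_const_eq_zero_iff {α b : ι → ℝ} {c t : ℝ} :
    expSum α (fun j => b j - c) t = 0 ↔ expSum α b t = 0 := by
  rw [expSum_sub_const, mul_eq_zero, or_iff_right (exp_ne_zero _)]

theorem expSum_ne_zero_of_mul_pos [Nonempty ι] {α : ι → ℝ} (a : ℝ)
    (hα : ∀ j, 0 < a * α j) (b : ι → ℝ) (t : ℝ) : expSum α b t ≠ 0 := by
  intro h
  have : 0 < a * expSum α b t := by
    rw [expSum, mul_sum]
    exact sum_pos (fun j _ => by rw [← mul_assoc]; exact mul_pos (hα j) (exp_pos _))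
      univ_nonempty
  simp [h] at this

theorem zeros_expSum_finite_and_ncard_le {n : ℕ} {α b : Fin (n + 1) → ℝ} (hb : StrictAnti b)
    (hα : ∀ j, α j ≠ 0) :
    {t | expSum α b t = 0}.Finite ∧ {t | expSum α b t = 0}.ncard ≤ (signChanges α).card := by
  induction hm : (signChanges α).card generalizing α b with
  | zero =>
    have hne := expSum_ne_zero_of_mul_pos (α 0)
      (mul_pos_of_signChanges_eq_empty hα (card_eq_zero.1 hm)) b
    simp [hne]
  | succ m ih =>
    obtain ⟨k, hk⟩ : (signChanges α).Nonempty := card_pos.1 (by omega)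
    have hbk : b k.succ < b k.castSucc := hb Fin.castSucc_lt_succ
    obtain ⟨c, hc_gt, hc_lt⟩ := exists_between hbk
    have hpos : ∀ j, j ≤ k.castSucc → 0 < b j - c := fun j hj => by
      have := hb.antitone hj; linarith
    have hneg : ∀ j, k.succ ≤ j → b j - c < 0 := fun j hj => by
      have := hb.antitone hj; linarith
    have hβ : ∀ j, α j * (b j - c) ≠ 0 := fun j => by
      refine mul_ne_zero (hα j) ?_
      rcases le_or_gt j k.castSucc with hj | hj
      · exact (hpos j hj).ne'
      · exact (hneg j (Fin.castSucc_lt_iff_succ_le.1 hj)).ne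
    have hβm : (signChanges fun j => α j * (b j - c)).card = m := by
      rw [signChanges_mul_eq_erase hk hpos hneg, card_erase_of_mem hk, hm, Nat.add_sub_cancel]
    obtain ⟨hfin', hcard'⟩ := ih (fun i j hij => sub_lt_sub_right (hb hij) c) hβ hβm
    obtain ⟨hfin, hcard⟩ := zeros_finite_and_ncard_le_of_hasDerivAt
      (hasDerivAt_expSum α fun j => b j - c) hfin'
    have hzeros : {t | expSum α (fun j => b j - c) t = 0} = {t | expSum α b t = 0} :=
      Set.ext fun _ => expSum_sub_const_eq_zero_iff
    rw [hzeros] at hfin hcard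
    exact ⟨hfin, by omega⟩

end ExpSum

theorem stmt_0_general (n : ℕ) (p : Fin (n + 1) → ℝ) (α : Fin (n + 1) → ℝ)
    (hp : StrictAnti p) (hppos : ∀ j, 0 < p j) (hα : ∀ j, α j ≠ 0)
    (f : ℝ → ℝ) (hf : ∀ t, f t = ∑ j, α j * (p j) ^ t) :
    {t : ℝ | f t = 0}.Finite ∧
      {t : ℝ | f t = 0}.ncard ≤
        (Finset.univ.filter fun j : Fin n => α j.castSucc * α j.succ < 0).card := by
  have hf_eq : f = expSum α fun j => log (p j) := funext fun t => by
    simp only [hf, expSum, rpow_def_of_pos (hppos _)]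
  rw [hf_eq]
  exact zeros_expSum_finite_and_ncard_le (fun i j hij => log_lt_log (hppos j) (hp hij)) hα

/-- A sum of exponentials `∑ αⱼ pⱼ^t` with strictly decreasing positive bases and
nonzero coefficients has at most as many real zeros (without multiplicity) as there
are sign changes in the coefficient sequence. -/
theorem stmt_0 (n : ℕ) (hn : 1 ≤ n) (p : Fin (n + 1) → ℝ) (α : Fin (n + 1) → ℝ)
    (hp : StrictAnti p) (hppos : ∀ j, 0 < p j) (hα : ∀ j, α j ≠ 0)
    (f : ℝ → ℝ) (hf : ∀ t, f t = ∑ j, α j * (p j) ^ t) :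
    {t : ℝ | f t = 0}.Finite ∧
      {t : ℝ | f t = 0}.ncard ≤
        (Finset.univ.filter fun j : Fin n => α j.castSucc * α j.succ < 0).card :=
  stmt_0_general n p α hp hppos hα f hf
end

section
/- Let θ_1 ≤ λ_1 ≤ λ_2 ≤ θ_2 be positive reals with λ_1 + λ_2 = θ_1 + θ_2. Define V(x) = e^{-θ_1 x} + e^{-θ_2 x} - e^{-(θ_1+θ_2)x} - (e^{-λ_1 x} + e^{-λ_2 x} - e^{-(λ_1+λ_2)x}). Then V(x) ≥ 0 for all x ∈ ℝ. -/
/-!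
Put `d = λ₁ - θ₁ = θ₂ - λ₂ ≥ 0`. The terms `e^{-(θ₁+θ₂)x}` and `e^{-(λ₁+λ₂)x}` cancel, and the rest
factors as `V(x) = (e^{-λ₁x} - e^{-θ₂x}) (e^{dx} - 1)`. Since `λ₁ ≤ θ₂` and `0 ≤ d`, both factors
have the sign of `x`, so their product is nonnegative.
-/

open Real

theorem exp_mul_sub_exp_mul_mul_nonneg {a b c d : ℝ} (hab : a ≤ b) (hcd : c ≤ d) (x : ℝ) :
    0 ≤ (exp (b * x) - exp (a * x)) * (exp (d * x) - exp (c * x)) := by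
  rcases le_total 0 x with hx | hx
  · exact mul_nonneg (sub_nonneg.2 (exp_le_exp.2 (mul_le_mul_of_nonneg_right hab hx)))
      (sub_nonneg.2 (exp_le_exp.2 (mul_le_mul_of_nonneg_right hcd hx)))
  · exact mul_nonneg_of_nonpos_of_nonpos
      (sub_nonpos.2 (exp_le_exp.2 (mul_le_mul_of_nonpos_right hab hx)))
      (sub_nonpos.2 (exp_le_exp.2 (mul_le_mul_of_nonpos_right hcd hx)))

theorem stmt_2_general (θ₁ θ₂ lam₁ lam₂ : ℝ) (h1 : θ₁ ≤ lam₁) (h2 : lam₁ ≤ lam₂)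
    (h3 : lam₂ ≤ θ₂) (hsum : lam₁ + lam₂ = θ₁ + θ₂) :
    ∀ x : ℝ,
      0 ≤ exp (-θ₁ * x) + exp (-θ₂ * x) - exp (-(θ₁ + θ₂) * x) -
        (exp (-lam₁ * x) + exp (-lam₂ * x) - exp (-(lam₁ + lam₂) * x)) := by
  intro x
  have hθ₁ : exp (-θ₁ * x) = exp ((lam₁ - θ₁) * x) * exp (-lam₁ * x) := by
    rw [← exp_add]; ring_nf
  have hlam₂ : exp (-lam₂ * x) = exp ((lam₁ - θ₁) * x) * exp (-θ₂ * x) := by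
    rw [← exp_add]; congr 1; linear_combination (-x) * hsum
  have hfactor : exp (-θ₁ * x) + exp (-θ₂ * x) - exp (-(θ₁ + θ₂) * x) -
      (exp (-lam₁ * x) + exp (-lam₂ * x) - exp (-(lam₁ + lam₂) * x)) =
      (exp (-lam₁ * x) - exp (-θ₂ * x)) * (exp ((lam₁ - θ₁) * x) - exp (0 * x)) := by
    rw [hsum, hθ₁, hlam₂, zero_mul, exp_zero]; ring
  rw [hfactor]
  exact exp_mul_sub_exp_mul_mul_nonneg (by linarith) (by linarith) x

theorem stmt_2 (θ₁ θ₂ lam₁ lam₂ : ℝ) (h0 : 0 < θ₁) (h1 : θ₁ ≤ lam₁) (h2 : lam₁ ≤ lam₂)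
    (h3 : lam₂ ≤ θ₂) (hsum : lam₁ + lam₂ = θ₁ + θ₂) :
    ∀ x : ℝ,
      0 ≤ exp (-θ₁ * x) + exp (-θ₂ * x) - exp (-(θ₁ + θ₂) * x) -
        (exp (-lam₁ * x) + exp (-lam₂ * x) - exp (-(lam₁ + lam₂) * x)) :=
  stmt_2_general θ₁ θ₂ lam₁ lam₂ h1 h2 h3 hsum
end

section
/- Let θ_1 ≤ λ_1 ≤ λ_2 ≤ θ_2 be positive reals with λ_1 + λ_2 = θ_1 + θ_2 and θ_1 λ_2 < λ_1 θ_2. Set c = θ_1/λ_1 and H(x) = e^{-θ_2 x} - e^{-(θ_1+θ_2)x} - e^{-c λ_2 x} + e^{-c(λ_1+λ_2)x}. Then H(x) ≤ 0 for all x ≥ 0. -/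
open Real

theorem stmt_5 (θ₁ θ₂ lam₁ lam₂ : ℝ) (h0 : 0 < θ₁) (h1 : θ₁ ≤ lam₁) (h2 : lam₁ ≤ lam₂)
    (h3 : lam₂ ≤ θ₂) (hsum : lam₁ + lam₂ = θ₁ + θ₂) (hcross : θ₁ * lam₂ < lam₁ * θ₂) :
    ∀ x : ℝ, 0 ≤ x →
      exp (-θ₂ * x) - exp (-(θ₁ + θ₂) * x) - exp (-(θ₁ / lam₁ * lam₂) * x) +
        exp (-(θ₁ / lam₁ * (lam₁ + lam₂)) * x) ≤ 0 := by
  intro x hx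
  have hl1 : (0:ℝ) < lam₁ := lt_of_lt_of_le h0 h1
  have key : θ₁ / lam₁ * (lam₁ + lam₂) = θ₁ + θ₁ / lam₁ * lam₂ := by
    field_simp
  have e1 : exp (-(θ₁ + θ₂) * x) = exp (-θ₁ * x) * exp (-θ₂ * x) := by
    rw [← exp_add]; ring_nf
  have e2 : exp (-(θ₁ / lam₁ * (lam₁ + lam₂)) * x)
      = exp (-θ₁ * x) * exp (-(θ₁ / lam₁ * lam₂) * x) := by
    rw [← exp_add, key]; ring_nf
  have hAB : exp (-θ₂ * x) ≤ exp (-(θ₁ / lam₁ * lam₂) * x) := by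
    apply exp_le_exp.2
    have : θ₁ / lam₁ * lam₂ ≤ θ₂ := by
      rw [div_mul_eq_mul_div, div_le_iff₀ hl1]
      nlinarith
    nlinarith
  have h1' : exp (-θ₁ * x) ≤ 1 := by
    apply exp_le_one_iff.2; nlinarith
  have h2' : (0:ℝ) < exp (-θ₁ * x) := exp_pos _
  nlinarith [exp_pos (-θ₂ * x)]
end

section
/- Let θ_1 ≤ λ_1 ≤ λ_2 ≤ θ_2 be positive reals with λ_1+λ_2 = θ_1+θ_2, and let a ≥ 1 and b ≥ 0. Define F̄_X(x) = e^{-λ_1 x}+e^{-λ_2 x}-e^{-(λ_1+λ_2)x} and F̄_Y(x) = e^{-θ_1 x}+e^{-θ_2 x}-e^{-(θ_1+θ_2)x}. Then F̄_Y(x) - F̄_X(ax+b) ≥ 0 for all x ≥ 0. -/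
open Real

theorem stmt_9 (θ₁ θ₂ lam₁ lam₂ a b : ℝ) (h0 : 0 < θ₁) (h1 : θ₁ ≤ lam₁) (h2 : lam₁ ≤ lam₂)
    (h3 : lam₂ ≤ θ₂) (hsum : lam₁ + lam₂ = θ₁ + θ₂) (ha : 1 ≤ a) (hb : 0 ≤ b) :
    ∀ x : ℝ, 0 ≤ x →
      0 ≤ (exp (-θ₁ * x) + exp (-θ₂ * x) - exp (-(θ₁ + θ₂) * x)) -
        (exp (-lam₁ * (a * x + b)) + exp (-lam₂ * (a * x + b)) -
          exp (-(lam₁ + lam₂) * (a * x + b))) := by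
  intro x hx
  set y := a * x + b with hy
  have hl1 : 0 < lam₁ := lt_of_lt_of_le h0 h1
  have hl2 : 0 < lam₂ := lt_of_lt_of_le hl1 h2
  have hxy : x ≤ y := by nlinarith
  -- Step A : F̄_X (y) ≤ F̄_X (x)
  have hA : exp (-lam₁ * y) + exp (-lam₂ * y) - exp (-(lam₁ + lam₂) * y)
      ≤ exp (-lam₁ * x) + exp (-lam₂ * x) - exp (-(lam₁ + lam₂) * x) := by
    have e1 : exp (-(lam₁ + lam₂) * x) = exp (-lam₁ * x) * exp (-lam₂ * x) := by
      rw [← Real.exp_add]; ring_nf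
    have e2 : exp (-(lam₁ + lam₂) * y) = exp (-lam₁ * y) * exp (-lam₂ * y) := by
      rw [← Real.exp_add]; ring_nf
    have m1 : exp (-lam₁ * y) ≤ exp (-lam₁ * x) := by
      apply Real.exp_le_exp.2; nlinarith
    have m2 : exp (-lam₂ * y) ≤ exp (-lam₂ * x) := by
      apply Real.exp_le_exp.2; nlinarith
    have b1 : exp (-lam₁ * x) ≤ 1 := Real.exp_le_one_iff.2 (by nlinarith)
    have b2 : exp (-lam₂ * x) ≤ 1 := Real.exp_le_one_iff.2 (by nlinarith)
    have p1 : 0 < exp (-lam₁ * y) := Real.exp_pos _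
    have p2 : 0 < exp (-lam₂ * y) := Real.exp_pos _
    rw [e1, e2]
    nlinarith [mul_nonneg (sub_nonneg.2 b1) (sub_nonneg.2 m2),
      mul_nonneg (sub_nonneg.2 (le_trans m2 b2)) (sub_nonneg.2 m1)]
  -- Step B : F̄_X (x) ≤ F̄_Y (x)
  have hB : exp (-lam₁ * x) + exp (-lam₂ * x) - exp (-(lam₁ + lam₂) * x)
      ≤ exp (-θ₁ * x) + exp (-θ₂ * x) - exp (-(θ₁ + θ₂) * x) := by
    have hsumx : exp (-(lam₁ + lam₂) * x) = exp (-(θ₁ + θ₂) * x) := by rw [hsum]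
    have hprod : exp (-θ₁ * x) * exp (-θ₂ * x) = exp (-lam₁ * x) * exp (-lam₂ * x) := by
      rw [← Real.exp_add, ← Real.exp_add]
      congr 1; nlinarith
    have h01 : exp (-lam₁ * x) ≤ exp (-θ₁ * x) := by
      apply Real.exp_le_exp.2; nlinarith
    have h02 : exp (-lam₂ * x) ≤ exp (-lam₁ * x) := by
      apply Real.exp_le_exp.2; nlinarith
    have hp : 0 < exp (-θ₁ * x) := Real.exp_pos _
    rw [hsumx]
    nlinarith [mul_nonneg (sub_nonneg.2 h01) (sub_nonneg.2 (le_trans h02 h01)), hprod, hp]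
  linarith
end

section
/- Let θ_1 ≤ λ_1 ≤ λ_2 ≤ θ_2 be positive reals with λ_1+λ_2 = θ_1+θ_2, and let a > 1. Define V(x) = F̄_Y(x) - F̄_X(ax), where F̄_X(x) = e^{-λ_1 x}+e^{-λ_2 x}-e^{-(λ_1+λ_2)x} and F̄_Y(x) = e^{-θ_1 x}+e^{-θ_2 x}-e^{-(θ_1+θ_2)x}. Then V(x) ≥ 0 for all x ≥ 0. -/
open Real

theorem stmt_10 (θ₁ θ₂ lam₁ lam₂ a : ℝ) (h0 : 0 < θ₁) (h1 : θ₁ ≤ lam₁) (h2 : lam₁ ≤ lam₂)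
    (h3 : lam₂ ≤ θ₂) (hsum : lam₁ + lam₂ = θ₁ + θ₂) (ha : 1 < a) :
    ∀ x : ℝ, 0 ≤ x →
      0 ≤ (exp (-θ₁ * x) + exp (-θ₂ * x) - exp (-(θ₁ + θ₂) * x)) -
        (exp (-lam₁ * (a * x)) + exp (-lam₂ * (a * x)) - exp (-(lam₁ + lam₂) * (a * x))) := by
  intro x hx
  have hl1 : 0 < lam₁ := lt_of_lt_of_le h0 h1
  have hl2 : 0 < lam₂ := lt_of_lt_of_le hl1 h2
  -- Step 1: exp(-lam₁ x)+exp(-lam₂ x) ≤ exp(-θ₁ x)+exp(-θ₂ x)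
  have e1 : exp (-θ₁ * x) = exp (-lam₁ * x) * exp ((lam₁ - θ₁) * x) := by
    rw [← exp_add]; ring_nf
  have e2 : exp (-lam₂ * x) = exp (-θ₂ * x) * exp ((lam₁ - θ₁) * x) := by
    rw [← exp_add]; congr 1; nlinarith
  have hE1 : (1 : ℝ) ≤ exp ((lam₁ - θ₁) * x) := by
    apply one_le_exp; nlinarith
  have hE2 : exp (-θ₂ * x) ≤ exp (-lam₁ * x) := by
    apply exp_le_exp.2; nlinarith
  have key1 : exp (-lam₁ * x) + exp (-lam₂ * x) ≤ exp (-θ₁ * x) + exp (-θ₂ * x) := by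
    rw [e1, e2]; nlinarith [exp_pos (-θ₂ * x)]
  -- Step 2: F̄_X(ax) ≤ F̄_X(x)
  have hax : x ≤ a * x := by nlinarith
  have m1 : exp (-lam₁ * (a * x)) ≤ exp (-lam₁ * x) := by
    apply exp_le_exp.2; nlinarith
  have m2 : exp (-lam₂ * (a * x)) ≤ exp (-lam₂ * x) := by
    apply exp_le_exp.2; nlinarith
  have u1 : exp (-lam₁ * x) ≤ 1 := by
    apply exp_le_one_iff.2; nlinarith
  have u2 : exp (-lam₂ * x) ≤ 1 := by
    apply exp_le_one_iff.2; nlinarith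
  have s1 : exp (-(lam₁ + lam₂) * x) = exp (-lam₁ * x) * exp (-lam₂ * x) := by
    rw [← exp_add]; ring_nf
  have s2 : exp (-(lam₁ + lam₂) * (a * x)) = exp (-lam₁ * (a * x)) * exp (-lam₂ * (a * x)) := by
    rw [← exp_add]; ring_nf
  have key2 : exp (-lam₁ * (a * x)) + exp (-lam₂ * (a * x)) - exp (-(lam₁ + lam₂) * (a * x))
      ≤ exp (-lam₁ * x) + exp (-lam₂ * x) - exp (-(lam₁ + lam₂) * x) := by
    rw [s1, s2]
    nlinarith [exp_pos (-lam₁ * (a * x)), exp_pos (-lam₂ * (a * x)),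
      mul_le_mul m1 m2 (exp_pos _).le (exp_pos _).le]
  have s3 : exp (-(θ₁ + θ₂) * x) = exp (-(lam₁ + lam₂) * x) := by rw [hsum]
  linarith
end

section
/- Let θ_1 ≤ λ_1 ≤ λ_2 ≤ θ_2 be positive reals with λ_1+λ_2 = θ_1+θ_2 and θ_1 λ_2 < λ_1 θ_2. Set a_0 = θ_1/λ_1. Then for every x_0 > 0 there exists b_0 > 0 such that F̄_Y(x_0) < F̄_X(a_0 x_0 + b_0), where F̄_X(x) = e^{-λ_1 x}+e^{-λ_2 x}-e^{-(λ_1+λ_2)x} and F̄_Y(x) = e^{-θ_1 x}+e^{-θ_2 x}-e^{-(θ_1+θ_2)x}. -/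
open Real

theorem stmt_12 (θ₁ θ₂ lam₁ lam₂ : ℝ) (h0 : 0 < θ₁) (h1 : θ₁ ≤ lam₁) (h2 : lam₁ ≤ lam₂)
    (h3 : lam₂ ≤ θ₂) (hsum : lam₁ + lam₂ = θ₁ + θ₂) (hcross : θ₁ * lam₂ < lam₁ * θ₂) :
    ∀ x₀ : ℝ, 0 < x₀ → ∃ b₀ : ℝ, 0 < b₀ ∧
      exp (-θ₁ * x₀) + exp (-θ₂ * x₀) - exp (-(θ₁ + θ₂) * x₀) <
        exp (-lam₁ * (θ₁ / lam₁ * x₀ + b₀)) + exp (-lam₂ * (θ₁ / lam₁ * x₀ + b₀)) -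
          exp (-(lam₁ + lam₂) * (θ₁ / lam₁ * x₀ + b₀)) := by
  intro x₀ hx₀
  have hl1 : 0 < lam₁ := lt_of_lt_of_le h0 h1
  set c : ℝ := exp (-θ₁ * x₀) + exp (-θ₂ * x₀) - exp (-(θ₁ + θ₂) * x₀) with hc
  set f : ℝ → ℝ := fun b =>
    exp (-lam₁ * (θ₁ / lam₁ * x₀ + b)) + exp (-lam₂ * (θ₁ / lam₁ * x₀ + b)) -
      exp (-(lam₁ + lam₂) * (θ₁ / lam₁ * x₀ + b)) with hf
  have hcont : ContinuousAt f 0 := by fun_prop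
  have hkey : c < f 0 := by
    have ht : θ₁ / lam₁ * x₀ + 0 = θ₁ / lam₁ * x₀ := by ring
    have hA1 : -lam₁ * (θ₁ / lam₁ * x₀) = -θ₁ * x₀ := by field_simp
    have hA2 : -(lam₁ + lam₂) * (θ₁ / lam₁ * x₀) = -θ₁ * x₀ + -lam₂ * (θ₁/lam₁*x₀) := by
      field_simp; ring
    have hBC : exp (-θ₂ * x₀) < exp (-lam₂ * (θ₁ / lam₁ * x₀)) := by
      apply exp_lt_exp.2
      rw [div_mul_eq_mul_div, mul_div_assoc, neg_mul, neg_mul, neg_lt_neg_iff,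
        mul_div_assoc', mul_div_assoc', div_lt_iff₀ hl1]
      nlinarith
    have hA : exp (-θ₁ * x₀) < 1 := by
      rw [exp_lt_one_iff]; nlinarith
    have hApos : 0 < exp (-θ₁ * x₀) := exp_pos _
    have hBpos : 0 < exp (-θ₂ * x₀) := exp_pos _
    simp only [hf, hc, ht, hA1, hA2]
    rw [show -(θ₁ + θ₂) * x₀ = -θ₁ * x₀ + -θ₂ * x₀ by ring, exp_add, exp_add]
    nlinarith [exp_pos (-lam₂ * (θ₁ / lam₁ * x₀))]
  have hev : ∀ᶠ b in nhdsWithin 0 (Set.Ioi (0:ℝ)), c < f b :=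
    nhdsWithin_le_nhds (hcont.eventually (eventually_gt_nhds hkey))
  obtain ⟨b₀, hb₁, hb₂⟩ := (hev.and (eventually_mem_nhdsWithin)).exists
  exact ⟨b₀, hb₂, hb₁⟩
end

section
/- Let θ_1 ≤ λ_1 ≤ λ_2 ≤ θ_2 be positive reals with λ_1+λ_2 = θ_1+θ_2 and θ_1 λ_2 < λ_1 θ_2. Set a_0 = θ_1/λ_1. Then F̄_Y(x) < F̄_X(a_0 x) for all x > 0, where F̄_X(x) = e^{-λ_1 x}+e^{-λ_2 x}-e^{-(λ_1+λ_2)x} and F̄_Y(x) = e^{-θ_1 x}+e^{-θ_2 x}-e^{-(θ_1+θ_2)x}. -/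
open Real

theorem stmt_13 (θ₁ θ₂ lam₁ lam₂ : ℝ) (h0 : 0 < θ₁) (h1 : θ₁ ≤ lam₁) (h2 : lam₁ ≤ lam₂)
    (h3 : lam₂ ≤ θ₂) (hsum : lam₁ + lam₂ = θ₁ + θ₂) (hcross : θ₁ * lam₂ < lam₁ * θ₂) :
    ∀ x : ℝ, 0 < x →
      exp (-θ₁ * x) + exp (-θ₂ * x) - exp (-(θ₁ + θ₂) * x) <
        exp (-lam₁ * (θ₁ / lam₁ * x)) + exp (-lam₂ * (θ₁ / lam₁ * x)) -
          exp (-(lam₁ + lam₂) * (θ₁ / lam₁ * x)) := by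
  intro x hx
  have hl1 : 0 < lam₁ := lt_of_lt_of_le h0 h1
  have e1 : -lam₁ * (θ₁ / lam₁ * x) = -θ₁ * x := by
    field_simp
  have e2 : -(lam₁ + lam₂) * (θ₁ / lam₁ * x) = -lam₂ * (θ₁ / lam₁ * x) + -θ₁ * x := by
    field_simp
    ring
  have e3 : -(θ₁ + θ₂) * x = -θ₂ * x + -θ₁ * x := by ring
  rw [e1, e2, e3, exp_add, exp_add]
  have key : exp (-θ₂ * x) < exp (-lam₂ * (θ₁ / lam₁ * x)) := by
    apply exp_lt_exp.mpr
    rw [neg_mul, neg_mul, neg_lt_neg_iff, div_mul_eq_mul_div, mul_div_assoc',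
      div_lt_iff₀ hl1]
    nlinarith
  have hpos : 0 < 1 - exp (-θ₁ * x) := by
    have : exp (-θ₁ * x) < 1 := by
      rw [exp_lt_one_iff]
      nlinarith
    linarith
  nlinarith [mul_lt_mul_of_pos_right key hpos]
end

section
/- With λ_1 = 2, λ_2 = 3, θ_1 = 3/2, θ_2 = 7/2, a = 0.749, b = 0.0125, define V(x) = F̄_Y(x) - F̄_X(ax+b) where F̄_X(x) = e^{-2x}+e^{-3x}-e^{-5x} and F̄_Y(x) = e^{-1.5x}+e^{-3.5x}-e^{-5x}. Then there exist 0 < x_1 < x_2 < x_3 < x_4 with V(x_1) > 0, V(x_2) < 0, V(x_3) > 0, and V(x_4) < 0. -/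
open Real

private lemma expNegLB (t : ℝ) : 1 - t ≤ exp (-t) := by
  nlinarith [Real.add_one_le_exp (-t)]

private lemma expNegUB (t : ℝ) (ht : 0 ≤ t) : exp (-t) ≤ 1 / (1 + t) := by
  rw [Real.exp_neg, inv_eq_one_div]
  exact one_div_le_one_div_of_le (by linarith) (by linarith [Real.add_one_le_exp t])

private lemma expPosLB (t : ℝ) : 1 + t ≤ exp t := by
  linarith [Real.add_one_le_exp t]

private lemma expPosUB (t : ℝ) (ht : t < 1) : exp t ≤ 1 / (1 - t) := by
  have h := expNegLB t
  have hm : exp (-t) * exp t = 1 := by rw [← Real.exp_add]; simp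
  have hp := Real.exp_pos t
  rw [le_div_iff₀ (by linarith : (0:ℝ) < 1 - t)]
  nlinarith

private lemma expSplit (q : ℝ) (n : ℕ) (hn : (n:ℝ) ≠ 0) :
    exp (-q) = exp (-(q/(n:ℝ))) ^ n := by
  rw [← Real.exp_nat_mul]
  congr 1
  field_simp

private lemma expPowLB (q : ℝ) (n : ℕ) (hn : 0 < (n:ℝ)) (hq : 0 ≤ q) (hqn : q ≤ (n:ℝ)) :
    (1 - q/(n:ℝ))^n ≤ exp (-q) := by
  rw [expSplit q n hn.ne']
  exact pow_le_pow_left₀ (by rw [sub_nonneg]; exact div_le_one_of_le₀ hqn hn.le)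
    (expNegLB _) n

private lemma expPowUB (q : ℝ) (n : ℕ) (hn : 0 < (n:ℝ)) (hq : 0 ≤ q) :
    exp (-q) ≤ ((n:ℝ)/((n:ℝ)+q))^n := by
  rw [expSplit q n hn.ne']
  have h1 : exp (-(q/(n:ℝ))) ≤ 1/(1+q/(n:ℝ)) := expNegUB _ (by positivity)
  have h2 : (1:ℝ)/(1+q/(n:ℝ)) = (n:ℝ)/((n:ℝ)+q) := by
    rw [div_eq_div_iff (by positivity) (by positivity)]
    field_simp
  exact pow_le_pow_left₀ (Real.exp_pos _).le (h2 ▸ h1) n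

private lemma expIntLB (k : ℕ) : ((1:ℝ)/2.7182818286)^k ≤ exp (-(k:ℝ)) := by
  have h : exp (-(k:ℝ)) = ((exp 1)⁻¹)^k := by
    rw [← Real.exp_neg, ← Real.exp_nat_mul]
    congr 1; ring
  rw [h]
  refine pow_le_pow_left₀ (by norm_num) ?_ k
  rw [one_div]
  exact inv_anti₀ (Real.exp_pos 1) Real.exp_one_lt_d9.le

private lemma expIntUB (k : ℕ) : exp (-(k:ℝ)) ≤ ((1:ℝ)/2.7182818283)^k := by
  have h : exp (-(k:ℝ)) = ((exp 1)⁻¹)^k := by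
    rw [← Real.exp_neg, ← Real.exp_nat_mul]
    congr 1; ring
  rw [h]
  refine pow_le_pow_left₀ (by positivity) ?_ k
  rw [one_div]
  exact inv_anti₀ (by norm_num) Real.exp_one_gt_d9.le

theorem stmt_14
    (V : ℝ → ℝ)
    (hV : ∀ x, V x = (exp (-(1.5 : ℝ) * x) + exp (-(3.5 : ℝ) * x) - exp (-(5 : ℝ) * x)) -
      (exp (-(2 : ℝ) * ((0.749 : ℝ) * x + 0.0125)) +
        exp (-(3 : ℝ) * ((0.749 : ℝ) * x + 0.0125)) -
        exp (-(5 : ℝ) * ((0.749 : ℝ) * x + 0.0125)))) :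
    ∃ x₁ x₂ x₃ x₄ : ℝ, 0 < x₁ ∧ x₁ < x₂ ∧ x₂ < x₃ ∧ x₃ < x₄ ∧
      0 < V x₁ ∧ V x₂ < 0 ∧ 0 < V x₃ ∧ V x₄ < 0 := by
  refine ⟨0.01, 1, 8, 20, by norm_num, by norm_num, by norm_num, by norm_num, ?_, ?_, ?_, ?_⟩
  · -- x₁ = 0.01 : V > 0
    rw [hV]
    have b1 : (0.98511083124191656111:ℝ) ≤ exp (-(1.5:ℝ) * 0.01) := by
      rw [show -(1.5:ℝ) * 0.01 = -(0.015:ℝ) by norm_num]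
      refine le_trans ?_ (expPowLB 0.015 100 (by norm_num) (by norm_num) (by norm_num))
      norm_num
    have b2 : (0.96559950056213953635:ℝ) ≤ exp (-(3.5:ℝ) * 0.01) := by
      rw [show -(3.5:ℝ) * 0.01 = -(0.035:ℝ) by norm_num]
      refine le_trans ?_ (expPowLB 0.035 100 (by norm_num) (by norm_num) (by norm_num))
      norm_num
    have b3 : exp (-(5:ℝ) * 0.01) ≤ (0.95124131098081562606:ℝ) := by
      rw [show -(5:ℝ) * 0.01 = -(0.05:ℝ) by norm_num]
      refine le_trans (expPowUB 0.05 100 (by norm_num) (by norm_num)) ?_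
      norm_num
    have b4 : exp (-(2:ℝ) * ((0.749:ℝ) * 0.01 + 0.0125)) ≤ (0.96081633190258844251:ℝ) := by
      rw [show -(2:ℝ) * ((0.749:ℝ) * 0.01 + 0.0125) = -(0.03998:ℝ) by norm_num]
      refine le_trans (expPowUB 0.03998 100 (by norm_num) (by norm_num)) ?_
      norm_num
    have b5 : exp (-(3:ℝ) * ((0.749:ℝ) * 0.01 + 0.0125)) ≤ (0.94180971565063423052:ℝ) := by
      rw [show -(3:ℝ) * ((0.749:ℝ) * 0.01 + 0.0125) = -(0.05997:ℝ) by norm_num]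
      refine le_trans (expPowUB 0.05997 100 (by norm_num) (by norm_num)) ?_
      norm_num
    have b6 : (0.90483743312789832486:ℝ) ≤ exp (-(5:ℝ) * ((0.749:ℝ) * 0.01 + 0.0125)) := by
      rw [show -(5:ℝ) * ((0.749:ℝ) * 0.01 + 0.0125) = -(0.09995:ℝ) by norm_num]
      refine le_trans ?_ (expPowLB 0.09995 100 (by norm_num) (by norm_num) (by norm_num))
      norm_num
    linarith
  · -- x₂ = 1 : V < 0
    rw [hV]
    have b1 : exp (-(1.5:ℝ) * 1) ≤ (0.22562944497359235102:ℝ) := by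
      rw [show -(1.5:ℝ) * 1 = -(1.5:ℝ) by norm_num]
      refine le_trans (expPowUB 1.5 100 (by norm_num) (by norm_num)) ?_
      norm_num
    have b2 : exp (-(3.5:ℝ) * 1) ≤ (0.032060110929955659256:ℝ) := by
      rw [show -(3.5:ℝ) * 1 = -(3.5:ℝ) by norm_num]
      refine le_trans (expPowUB 3.5 100 (by norm_num) (by norm_num)) ?_
      norm_num
    have b3 : (0.0059205292203340254829:ℝ) ≤ exp (-(5:ℝ) * 1) := by
      rw [show -(5:ℝ) * 1 = -(5:ℝ) by norm_num]
      refine le_trans ?_ (expPowLB 5 100 (by norm_num) (by norm_num) (by norm_num))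
      norm_num
    have b4 : (0.21551672517950244573:ℝ) ≤ exp (-(2:ℝ) * ((0.749:ℝ) * 1 + 0.0125)) := by
      rw [show -(2:ℝ) * ((0.749:ℝ) * 1 + 0.0125) = -(1.523:ℝ) by norm_num]
      refine le_trans ?_ (expPowLB 1.523 100 (by norm_num) (by norm_num) (by norm_num))
      norm_num
    have b5 : (0.099162133159495750089:ℝ) ≤ exp (-(3:ℝ) * ((0.749:ℝ) * 1 + 0.0125)) := by
      rw [show -(3:ℝ) * ((0.749:ℝ) * 1 + 0.0125) = -(2.2845:ℝ) by norm_num]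
      refine le_trans ?_ (expPowLB 2.2845 100 (by norm_num) (by norm_num) (by norm_num))
      norm_num
    have b6 : exp (-(5:ℝ) * ((0.749:ℝ) * 1 + 0.0125)) ≤ (0.023830151106453323204:ℝ) := by
      rw [show -(5:ℝ) * ((0.749:ℝ) * 1 + 0.0125) = -(3.8075:ℝ) by norm_num]
      refine le_trans (expPowUB 3.8075 100 (by norm_num) (by norm_num)) ?_
      norm_num
    linarith
  · -- x₃ = 8 : V > 0
    rw [hV]
    have b1 : (0.0000061442123495049593651:ℝ) ≤ exp (-(1.5:ℝ) * 8) := by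
      rw [show -(1.5:ℝ) * 8 = -((12:ℕ):ℝ) by norm_num]
      refine le_trans ?_ (expIntLB 12)
      norm_num
    have b2 : (0.00000000000069144000969010328228:ℝ) ≤ exp (-(3.5:ℝ) * 8) := by
      rw [show -(3.5:ℝ) * 8 = -((28:ℕ):ℝ) by norm_num]
      refine le_trans ?_ (expIntLB 28)
      norm_num
    have b3 : exp (-(5:ℝ) * 8) ≤ (0.0000000000000000042483542652343476330:ℝ) := by
      rw [show -(5:ℝ) * 8 = -((40:ℕ):ℝ) by norm_num]
      refine le_trans (expIntUB 40) ?_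
      norm_num
    have b4 : exp (-(2:ℝ) * ((0.749:ℝ) * 8 + 0.0125)) ≤ (0.0000060894076884461300601:ℝ) := by
      rw [show -(2:ℝ) * ((0.749:ℝ) * 8 + 0.0125) = -((12:ℕ):ℝ) + -(0.009:ℝ) by push_cast; norm_num]
      rw [Real.exp_add]
      calc exp (-((12:ℕ):ℝ)) * exp (-(0.009:ℝ))
          ≤ ((1:ℝ)/2.7182818283)^12 * (1/(1+0.009)) :=
            mul_le_mul (expIntUB 12) (expNegUB 0.009 (by norm_num)) (Real.exp_pos _).le
              (by positivity)
        _ ≤ (0.0000060894076884461300601:ℝ) := by norm_num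
    have b5 : exp (-(3:ℝ) * ((0.749:ℝ) * 8 + 0.0125)) ≤ (0.000000015027113725458701382:ℝ) := by
      rw [show -(3:ℝ) * ((0.749:ℝ) * 8 + 0.0125) = -((18:ℕ):ℝ) + -(0.0135:ℝ) by push_cast; norm_num]
      rw [Real.exp_add]
      calc exp (-((18:ℕ):ℝ)) * exp (-(0.0135:ℝ))
          ≤ ((1:ℝ)/2.7182818283)^18 * (1/(1+0.0135)) :=
            mul_le_mul (expIntUB 18) (expNegUB 0.0135 (by norm_num)) (Real.exp_pos _).le
              (by positivity)
        _ ≤ (0.000000015027113725458701382:ℝ) := by norm_num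
    have b6 : (0.000000000000091470764378117968163:ℝ) ≤
        exp (-(5:ℝ) * ((0.749:ℝ) * 8 + 0.0125)) := by
      rw [show -(5:ℝ) * ((0.749:ℝ) * 8 + 0.0125) = -((30:ℕ):ℝ) + -(0.0225:ℝ) by push_cast; norm_num]
      rw [Real.exp_add]
      calc (0.000000000000091470764378117968163:ℝ)
          ≤ ((1:ℝ)/2.7182818286)^30 * (1 - 0.0225) := by norm_num
        _ ≤ exp (-((30:ℕ):ℝ)) * exp (-(0.0225:ℝ)) :=
            mul_le_mul (expIntLB 30) (expNegLB 0.0225) (by norm_num) (Real.exp_pos _).le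
    linarith
  · -- x₄ = 20 : V < 0
    rw [hV]
    have b1 : exp (-(1.5:ℝ) * 20) ≤ (0.000000000000093576229852654620780:ℝ) := by
      rw [show -(1.5:ℝ) * 20 = -((30:ℕ):ℝ) by norm_num]
      refine le_trans (expIntUB 30) ?_
      norm_num
    have b2 : exp (-(3.5:ℝ) * 20) ≤ (0.00000000000000000000000000000039754497521907494774:ℝ) := by
      rw [show -(3.5:ℝ) * 20 = -((70:ℕ):ℝ) by norm_num]
      refine le_trans (expIntUB 70) ?_
      norm_num
    have b3 : (0.000000000000000000000000000000000000000000037200759567306201075:ℝ) ≤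
        exp (-(5:ℝ) * 20) := by
      rw [show -(5:ℝ) * 20 = -((100:ℕ):ℝ) by norm_num]
      refine le_trans ?_ (expIntLB 100)
      norm_num
    have b4 : (0.000000000000094979872985974156200:ℝ) ≤
        exp (-(2:ℝ) * ((0.749:ℝ) * 20 + 0.0125)) := by
      rw [show -(2:ℝ) * ((0.749:ℝ) * 20 + 0.0125) = -((30:ℕ):ℝ) + (0.015:ℝ) by push_cast; norm_num]
      rw [Real.exp_add]
      calc (0.000000000000094979872985974156200:ℝ)
          ≤ ((1:ℝ)/2.7182818286)^30 * (1 + 0.015) := by norm_num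
        _ ≤ exp (-((30:ℕ):ℝ)) * exp (0.015:ℝ) :=
            mul_le_mul (expIntLB 30) (expPosLB 0.015) (by norm_num) (Real.exp_pos _).le
    have b5 : (0.000000000000000000029269252417819324044:ℝ) ≤
        exp (-(3:ℝ) * ((0.749:ℝ) * 20 + 0.0125)) := by
      rw [show -(3:ℝ) * ((0.749:ℝ) * 20 + 0.0125) = -((45:ℕ):ℝ) + (0.0225:ℝ) by push_cast; norm_num]
      rw [Real.exp_add]
      calc (0.000000000000000000029269252417819324044:ℝ)
          ≤ ((1:ℝ)/2.7182818286)^45 * (1 + 0.0225) := by norm_num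
        _ ≤ exp (-((45:ℕ):ℝ)) * exp (0.0225:ℝ) :=
            mul_le_mul (expIntLB 45) (expPosLB 0.0225) (by norm_num) (Real.exp_pos _).le
    have b6 : exp (-(5:ℝ) * ((0.749:ℝ) * 20 + 0.0125)) ≤
        (0.0000000000000000000000000000000027829994530519486810:ℝ) := by
      rw [show -(5:ℝ) * ((0.749:ℝ) * 20 + 0.0125) = -((75:ℕ):ℝ) + (0.0375:ℝ) by push_cast; norm_num]
      rw [Real.exp_add]
      calc exp (-((75:ℕ):ℝ)) * exp (0.0375:ℝ)
          ≤ ((1:ℝ)/2.7182818283)^75 * (1/(1-0.0375)) :=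
            mul_le_mul (expIntUB 75) (expPosUB 0.0375 (by norm_num)) (Real.exp_pos _).le
              (by positivity)
        _ ≤ (0.0000000000000000000000000000000027829994530519486810:ℝ) := by norm_num
    linarith
end

section
/- Let θ_1 ≤ λ_1 ≤ λ_2 ≤ θ_2 be positive reals with λ_1+λ_2 = θ_1+θ_2, and let 0 < a < 1 with θ_1 < aλ_1. Define V(x) = F̄_Y(x) - F̄_X(ax). Then, as x traverses [0,∞), V changes sign at most once, and if a sign change occurs it is from negative to positive. -/
open Real Set

/-!
Write `L u = log (1 - exp (-u))`, so that `1 - F̄(x) = exp (L (λ₁ x) + L (λ₂ x))`. With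
`p = θ₁ ≤ b = aλ₁ ≤ c = aλ₂ ≤ q = θ₂`, `V x > 0` iff `L (q x) - L (c x) < L (b x) - L (p x)`.
Both sides are integrals over `t ∈ [c, q]` and `[p, b]` of the kernel `x / (exp (t x) - 1)`,
which is reverse TP₂ in `(x, t)` because `(exp (t x) - 1) / (exp (t s) - 1)` increases in `t`
for `s ≤ x` (a consequence of the convexity of `exp`). Hence the ratio of the two increments
decreases in `x`, so once `V` is positive it stays positive.
-/

theorem exp_mul_sub_one_pos {t y : ℝ} (ht : 0 < t) (hy : 0 < y) : 0 < exp (t * y) - 1 := by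
  rw [sub_pos, one_lt_exp_iff]; positivity

theorem mul_exp_mul_exp_sub_one_le {u v : ℝ} (hu : 0 < u) (huv : u ≤ v) :
    u * exp u * (exp v - 1) ≤ v * exp v * (exp u - 1) := by
  have hv : 0 < v := hu.trans_le huv
  have secant := convexOn_exp.secant_mono (a := 0) (mem_univ _) (mem_univ (-v)) (mem_univ (-u))
    (by linarith) (by linarith) (by linarith)
  rw [exp_zero, sub_zero, sub_zero, ← neg_sub, ← neg_sub 1 (exp (-u)), neg_div_neg_eq,
    neg_div_neg_eq, div_le_div_iff₀ hv hu, exp_neg, exp_neg] at secant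
  have key := mul_le_mul_of_nonneg_left secant (mul_pos (exp_pos u) (exp_pos v)).le
  field_simp at key
  linarith

theorem monotoneOn_exp_mul_sub_one_div {s x : ℝ} (hs : 0 < s) (hsx : s ≤ x) :
    MonotoneOn (fun t => (exp (t * x) - 1) / (exp (t * s) - 1)) (Ioi 0) := by
  have hasDeriv (y t : ℝ) : HasDerivAt (fun t => exp (t * y) - 1) (exp (t * y) * y) t := by
    simpa using (((hasDerivAt_id t).mul_const y).exp).sub_const 1
  have hquot {t : ℝ} (ht : 0 < t) :=
    (hasDeriv x t).div (hasDeriv s t) (exp_mul_sub_one_pos ht hs).ne'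
  refine monotoneOn_of_hasDerivWithinAt_nonneg (convex_Ioi 0)
    (fun t ht => (hquot ht).continuousAt.continuousWithinAt)
    (fun t ht => (hquot (interior_subset ht)).hasDerivWithinAt) (fun t ht => ?_)
  rw [interior_Ioi] at ht
  have ht : 0 < t := ht
  have core := mul_exp_mul_exp_sub_one_le (mul_pos ht hs) (mul_le_mul_of_nonneg_left hsx ht.le)
  refine div_nonneg ?_ (sq_nonneg _)
  nlinarith

theorem div_exp_mul_sub_one_mul_le {s x t t' : ℝ} (hs : 0 < s) (hsx : s ≤ x) (ht : 0 < t)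
    (htt' : t ≤ t') :
    s / (exp (t * s) - 1) * (x / (exp (t' * x) - 1)) ≤
      x / (exp (t * x) - 1) * (s / (exp (t' * s) - 1)) := by
  have hx := hs.trans_le hsx
  have ht' := ht.trans_le htt'
  have ratio := monotoneOn_exp_mul_sub_one_div hs hsx ht ht' htt'
  simp only at ratio
  rw [div_le_div_iff₀ (exp_mul_sub_one_pos ht hs) (exp_mul_sub_one_pos ht' hs)] at ratio
  rw [div_mul_div_comm, div_mul_div_comm, div_le_div_iff₀
    (mul_pos (exp_mul_sub_one_pos ht hs) (exp_mul_sub_one_pos ht' hx))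
    (mul_pos (exp_mul_sub_one_pos ht hx) (exp_mul_sub_one_pos ht' hs))]
  calc s * x * ((exp (t * x) - 1) * (exp (t' * s) - 1))
      ≤ s * x * ((exp (t' * x) - 1) * (exp (t * s) - 1)) := by gcongr
    _ = _ := by ring

noncomputable def logOneSubExpNeg (u : ℝ) : ℝ := log (1 - exp (-u))

theorem one_sub_exp_neg_pos {u : ℝ} (hu : 0 < u) : 0 < 1 - exp (-u) := by
  rw [sub_pos, exp_lt_one_iff]; linarith

theorem monotoneOn_logOneSubExpNeg : MonotoneOn logOneSubExpNeg (Ioi 0) := fun u hu v _ huv =>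
  log_le_log (one_sub_exp_neg_pos hu) (by gcongr)

theorem hasDerivAt_logOneSubExpNeg_mul {t y : ℝ} (ht : 0 < t) (hy : 0 < y) :
    HasDerivAt (fun t => logOneSubExpNeg (t * y)) (y / (exp (t * y) - 1)) t := by
  have h := (((hasDerivAt_id t).mul_const y).neg.exp.const_sub 1).log
    (one_sub_exp_neg_pos (mul_pos ht hy)).ne'
  refine h.congr_deriv ?_
  have := exp_mul_sub_one_pos ht hy
  simp only [Pi.neg_apply, id, exp_neg]
  field_simp

theorem sub_mul_le_sub_mul_of_hasDerivAt {U W u w : ℝ → ℝ} {t₁ t₂ K K' : ℝ} (ht : t₁ ≤ t₂)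
    (hU : ∀ t ∈ Icc t₁ t₂, HasDerivAt U (u t) t) (hW : ∀ t ∈ Icc t₁ t₂, HasDerivAt W (w t) t)
    (h : ∀ t ∈ Icc t₁ t₂, w t * K' ≤ u t * K) :
    (W t₂ - W t₁) * K' ≤ (U t₂ - U t₁) * K := by
  have hD (t) (ht : t ∈ Icc t₁ t₂) := ((hU t ht).mul_const K).sub ((hW t ht).mul_const K')
  have mono : MonotoneOn (fun t => U t * K - W t * K') (Icc t₁ t₂) :=
    monotoneOn_of_hasDerivWithinAt_nonneg (convex_Icc t₁ t₂)
      (fun t ht => (hD t ht).continuousAt.continuousWithinAt)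
      (fun t ht => (hD t (interior_subset ht)).hasDerivWithinAt)
      (fun t ht => sub_nonneg.2 (h t (interior_subset ht)))
  have := mono (left_mem_Icc.2 ht) (right_mem_Icc.2 ht) ht
  simp only at this
  linarith

theorem logOneSubExpNeg_add_lt_add_of_le {p b c q s x : ℝ} (hp : 0 < p) (hpb : p ≤ b)
    (hbc : b ≤ c) (hcq : c ≤ q) (hs : 0 < s) (hsx : s ≤ x)
    (h : logOneSubExpNeg (p * s) + logOneSubExpNeg (q * s) <
      logOneSubExpNeg (b * s) + logOneSubExpNeg (c * s)) :
    logOneSubExpNeg (p * x) + logOneSubExpNeg (q * x) <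
      logOneSubExpNeg (b * x) + logOneSubExpNeg (c * x) := by
  have hx := hs.trans_le hsx
  have hb := hp.trans_le hpb
  have hc := hb.trans_le hbc
  set L := logOneSubExpNeg
  set k : ℝ → ℝ → ℝ := fun y t => y / (exp (t * y) - 1)
  have k_pos {y t : ℝ} (hy : 0 < y) (ht : 0 < t) : 0 < k y t :=
    div_pos hy (exp_mul_sub_one_pos ht hy)
  have hasDeriv {y t₁ : ℝ} (hy : 0 < y) (ht₁ : 0 < t₁) (t₂ : ℝ) :
      ∀ t ∈ Icc t₁ t₂, HasDerivAt (fun t => L (t * y)) (k y t) t :=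
    fun t ht => hasDerivAt_logOneSubExpNeg_mul (ht₁.trans_le ht.1) hy
  have kernel {t t' : ℝ} (ht : 0 < t) (htt' : t ≤ t') : k s t * k x t' ≤ k x t * k s t' :=
    div_exp_mul_sub_one_mul_le hs hsx ht htt'
  have right : (L (b * s) - L (p * s)) * k x b ≤ (L (b * x) - L (p * x)) * k s b :=
    sub_mul_le_sub_mul_of_hasDerivAt hpb (hasDeriv hx hp b) (hasDeriv hs hp b)
      fun t ht => kernel (hp.trans_le ht.1) ht.2
  have left : (L (q * x) - L (c * x)) * k s c ≤ (L (q * s) - L (c * s)) * k x c :=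
    sub_mul_le_sub_mul_of_hasDerivAt hcq (hasDeriv hs hc q) (hasDeriv hx hc q)
      fun t ht => by linarith [kernel hc ht.1]
  have hB : 0 ≤ L (b * x) - L (p * x) := sub_nonneg.2 <|
    monotoneOn_logOneSubExpNeg (mul_pos hp hx) (mul_pos hb hx) (by gcongr)
  have key : (L (q * x) - L (c * x)) * (k s c * k x b) <
      (L (b * x) - L (p * x)) * (k s c * k x b) := calc
    _ ≤ (L (q * s) - L (c * s)) * k x c * k x b := by
      rw [← mul_assoc]; exact mul_le_mul_of_nonneg_right left (k_pos hx hb).le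
    _ < (L (b * s) - L (p * s)) * k x b * k x c := by
      rw [mul_right_comm]
      exact mul_lt_mul_of_pos_right (mul_lt_mul_of_pos_right (by linarith) (k_pos hx hb))
        (k_pos hx hc)
    _ ≤ (L (b * x) - L (p * x)) * k s b * k x c :=
      mul_le_mul_of_nonneg_right right (k_pos hx hc).le
    _ ≤ (L (b * x) - L (p * x)) * (k s c * k x b) := by
      rw [mul_assoc]; exact mul_le_mul_of_nonneg_left (by linarith [kernel hb hbc]) hB
  linarith [lt_of_mul_lt_mul_right key (mul_pos (k_pos hs hc) (k_pos hx hb)).le]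

theorem exp_neg_add_exp_neg_sub_exp_neg_add {u v : ℝ} (hu : 0 < u) (hv : 0 < v) :
    exp (-u) + exp (-v) - exp (-(u + v)) = 1 - exp (logOneSubExpNeg u + logOneSubExpNeg v) := by
  rw [exp_add, logOneSubExpNeg, logOneSubExpNeg, exp_log (one_sub_exp_neg_pos hu),
    exp_log (one_sub_exp_neg_pos hv), neg_add, exp_add]
  ring

theorem nonpos_or_signChange_of_pos_of_le {V : ℝ → ℝ}
    (hV : ∀ s x, 0 ≤ s → s ≤ x → 0 < V s → 0 < V x) :
    (∀ x : ℝ, 0 ≤ x → V x ≤ 0) ∨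
      ∃ t : ℝ, 0 ≤ t ∧ ∀ x : ℝ, 0 ≤ x → (x < t → V x ≤ 0) ∧ (t < x → 0 ≤ V x) := by
  refine or_iff_not_imp_left.2 fun hpos => ?_
  push Not at hpos
  obtain ⟨x₀, hx₀, hVx₀⟩ := hpos
  have hS : {y | 0 ≤ y ∧ 0 < V y}.Nonempty := ⟨x₀, hx₀, hVx₀⟩
  have hbdd : BddBelow {y | 0 ≤ y ∧ 0 < V y} := ⟨0, fun y hy => hy.1⟩
  refine ⟨sInf {y | 0 ≤ y ∧ 0 < V y}, le_csInf hS fun y hy => hy.1,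
    fun x hx => ⟨fun hxt => not_lt.1 fun hVx => ?_, fun htx => ?_⟩⟩
  · exact (csInf_le hbdd ⟨hx, hVx⟩).not_gt hxt
  · obtain ⟨s, ⟨hs, hVs⟩, hsx⟩ := exists_lt_of_csInf_lt hS htx
    exact (hV s x hs hsx.le hVs).le

theorem stmt_16_general (θ₁ θ₂ lam₁ lam₂ a : ℝ) (h0 : 0 < θ₁) (h2 : lam₁ ≤ lam₂)
    (h3 : lam₂ ≤ θ₂) (ha0 : 0 < a) (ha1 : a < 1)
    (haθ : θ₁ < a * lam₁)
    (V : ℝ → ℝ)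
    (hV : ∀ x, V x = (exp (-θ₁ * x) + exp (-θ₂ * x) - exp (-(θ₁ + θ₂) * x)) -
      (exp (-lam₁ * (a * x)) + exp (-lam₂ * (a * x)) - exp (-(lam₁ + lam₂) * (a * x)))) :
    (∀ x : ℝ, 0 ≤ x → V x ≤ 0) ∨
      ∃ t : ℝ, 0 ≤ t ∧ ∀ x : ℝ, 0 ≤ x → (x < t → V x ≤ 0) ∧ (t < x → 0 ≤ V x) := by
  have hb : 0 < a * lam₁ := h0.trans haθ
  have hbc : a * lam₁ ≤ a * lam₂ := by gcongr
  have hcq : a * lam₂ ≤ θ₂ := by nlinarith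
  have hV_pos_iff {y : ℝ} (hy : 0 < y) : 0 < V y ↔
      logOneSubExpNeg (θ₁ * y) + logOneSubExpNeg (θ₂ * y) <
        logOneSubExpNeg (a * lam₁ * y) + logOneSubExpNeg (a * lam₂ * y) := by
    have hθ := exp_neg_add_exp_neg_sub_exp_neg_add (mul_pos h0 hy)
      (mul_pos ((hb.trans_le hbc).trans_le hcq) hy)
    have hlam := exp_neg_add_exp_neg_sub_exp_neg_add (mul_pos hb hy)
      (mul_pos (hb.trans_le hbc) hy)
    have hVy : V y = (1 - exp (logOneSubExpNeg (θ₁ * y) + logOneSubExpNeg (θ₂ * y))) -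
        (1 - exp (logOneSubExpNeg (a * lam₁ * y) + logOneSubExpNeg (a * lam₂ * y))) := by
      rw [hV, ← hθ, ← hlam]; ring_nf
    rw [hVy, sub_sub_sub_cancel_left, sub_pos, exp_lt_exp]
  refine nonpos_or_signChange_of_pos_of_le fun s x hs hsx hVs => ?_
  rcases hs.eq_or_lt with rfl | hs
  · simp [hV] at hVs
  rw [hV_pos_iff (hs.trans_le hsx)]
  exact logOneSubExpNeg_add_lt_add_of_le h0 haθ.le hbc hcq hs hsx ((hV_pos_iff hs).1 hVs)

theorem stmt_16 (θ₁ θ₂ lam₁ lam₂ a : ℝ) (h0 : 0 < θ₁) (h1 : θ₁ ≤ lam₁) (h2 : lam₁ ≤ lam₂)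
    (h3 : lam₂ ≤ θ₂) (hsum : lam₁ + lam₂ = θ₁ + θ₂) (ha0 : 0 < a) (ha1 : a < 1)
    (haθ : θ₁ < a * lam₁)
    (V : ℝ → ℝ)
    (hV : ∀ x, V x = (exp (-θ₁ * x) + exp (-θ₂ * x) - exp (-(θ₁ + θ₂) * x)) -
      (exp (-lam₁ * (a * x)) + exp (-lam₂ * (a * x)) - exp (-(lam₁ + lam₂) * (a * x)))) :
    (∀ x : ℝ, 0 ≤ x → V x ≤ 0) ∨
      ∃ t : ℝ, 0 ≤ t ∧ ∀ x : ℝ, 0 ≤ x → (x < t → V x ≤ 0) ∧ (t < x → 0 ≤ V x) :=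
  stmt_16_general θ₁ θ₂ lam₁ lam₂ a h0 h2 h3 ha0 ha1 haθ V hV
end
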